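/- arXiv:2406.02663 — 2 statements merged into one kernel-verified Lean document; each statement's English description precedes it below -/
import Mathlib

section
/- Under the hypotheses of the cross-dataset learnability bound, if the cross-dataset learnability of target feature φ_t equals 1 − ε for some ε ∈ (0,1), then the number of samples satisfies P ≥ σ² λ_t⁻¹ (1−ε) |⟨φ_t, y⟩_q| / √(E_D[φ_t²] · E_D[y²]). -/
/-!
Write `f̂ = ∑ ν, c ν • k(·, x ν)` with `c = (K + σ² I)⁻¹ y`. The Mercer expansion gives
`⟨φ t, f̂⟩_q = λ t * w t` with `w t = ∑ ν, c ν * φ t (x ν)`. Exchanging the Mercer series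
with the integral is the analytic point: the series is dominated only on the sublevel sets
`{x | k x x ≤ n}`, and the remainder is controlled by Bessel's inequality, which needs the
coefficients `λ i * w i` to be square-summable; this holds because every eigenvalue is at
most `‖k‖_{L²(q ⊗ q)}`. Since `K` is positive semidefinite, `(K + σ² I)⁻¹` has norm at most
`σ⁻²`, so `|w t| ≤ σ⁻² ‖φ t (x ·)‖ ‖y (x ·)‖`, and `⟨φ t, f̂⟩_q = (1 - ε) ⟨φ t, y⟩_q` turns
this into the lower bound on `P`.
-/

open MeasureTheory Matrix
open Filter Topology Set

section L2

variable {Y : Type*} [MeasurableSpace Y] {μ : Measure Y}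

theorem memLp_two_of_integral_mul_self_eq_one {f : Y → ℝ} (hf : AEStronglyMeasurable f μ)
    (h : ∫ y, f y * f y ∂μ = 1) : MemLp f 2 μ :=
  (memLp_two_iff_integrable_sq hf).2 <| by
    simpa only [sq] using Integrable.of_integral_ne_zero (h ▸ one_ne_zero)

theorem MeasureTheory.MemLp.mul_prod {Z : Type*} [MeasurableSpace Z] {ν : Measure Z} [SFinite μ]
    [SFinite ν] {f : Y → ℝ} {g : Z → ℝ} (hf : MemLp f 2 μ) (hg : MemLp g 2 ν) :
    MemLp (fun p : Y × Z => f p.1 * g p.2) 2 (μ.prod ν) :=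
  (memLp_two_iff_integrable_sq (hf.1.comp_fst.mul hg.1.comp_snd)).2 <| by
    simpa only [Pi.mul_apply, mul_pow] using hf.integrable_sq.mul_prod hg.integrable_sq

theorem integral_mul_eq_inner_toLp {f g : Y → ℝ} (hf : MemLp f 2 μ) (hg : MemLp g 2 μ) :
    ∫ y, f y * g y ∂μ = inner ℝ (hf.toLp f) (hg.toLp g) := by
  rw [L2.inner_def]
  refine integral_congr_ae ?_
  filter_upwards [hf.coeFn_toLp, hg.coeFn_toLp] with y hfy hgy
  simp [hfy, hgy, mul_comm]

theorem integral_sq_eq_norm_toLp_sq {f : Y → ℝ} (hf : MemLp f 2 μ) :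
    ∫ y, f y ^ 2 ∂μ = ‖hf.toLp f‖ ^ 2 := by
  simp_rw [sq, integral_mul_eq_inner_toLp hf hf, real_inner_self_eq_norm_sq, sq]

theorem abs_integral_mul_le_sqrt_mul_sqrt {f g : Y → ℝ} (hf : MemLp f 2 μ)
    (hg : MemLp g 2 μ) :
    |∫ y, f y * g y ∂μ| ≤ √(∫ y, f y ^ 2 ∂μ) * √(∫ y, g y ^ 2 ∂μ) := by
  rw [integral_mul_eq_inner_toLp hf hg, integral_sq_eq_norm_toLp_sq hf,
    integral_sq_eq_norm_toLp_sq hg, Real.sqrt_sq (norm_nonneg _), Real.sqrt_sq (norm_nonneg _)]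
  exact abs_real_inner_le_norm _ _

theorem sum_sq_integral_mul_le {ι : Type*} [DecidableEq ι] {ψ : ι → Y → ℝ}
    (hψ : ∀ i, MemLp (ψ i) 2 μ)
    (horth : ∀ i j, ∫ y, ψ i y * ψ j y ∂μ = if i = j then 1 else 0)
    {f : Y → ℝ} (hf : MemLp f 2 μ) (s : Finset ι) :
    ∑ i ∈ s, (∫ y, ψ i y * f y ∂μ) ^ 2 ≤ ∫ y, f y ^ 2 ∂μ := by
  have hon : Orthonormal ℝ fun i => (hψ i).toLp (ψ i) := by
    rw [orthonormal_iff_ite]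
    intro i j
    rw [← integral_mul_eq_inner_toLp, horth]
  have := hon.sum_inner_products_le (hf.toLp f) (s := s)
  simpa [integral_mul_eq_inner_toLp (hψ _) hf, integral_sq_eq_norm_toLp_sq hf] using this

theorem hasSum_integral_of_abs_sum_le {ι : Type*} [Countable ι] {F : ι → Y → ℝ}
    {f : Y → ℝ} {bound : Y → ℝ} (hF : ∀ i, AEStronglyMeasurable (F i) μ)
    (hbound : Integrable bound μ)
    (hle : ∀ s : Finset ι, ∀ᵐ y ∂μ, |∑ i ∈ s, F i y| ≤ bound y)
    (hsum : ∀ᵐ y ∂μ, HasSum (F · y) (f y)) :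
    HasSum (fun i => ∫ y, F i y ∂μ) (∫ y, f y ∂μ) := by
  have hFi (i : ι) : Integrable (F i) μ :=
    hbound.mono' (hF i) (by simpa using hle {i})
  have := tendsto_integral_filter_of_dominated_convergence (l := atTop)
    (F := fun s y => ∑ i ∈ s, F i y) bound
    (.of_forall fun s => Finset.aestronglyMeasurable_fun_sum s fun i _ => hF i)
    (.of_forall hle) hbound hsum
  simp only [integral_finsetSum _ fun i _ => hFi i] at this
  exact this

section Orthonormal

variable {ι : Type*} [DecidableEq ι] {ψ : ι → Y → ℝ}

theorem abs_le_sqrt_of_hasSum_mul_integral_mul (hψ : ∀ i, MemLp (ψ i) 2 μ)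
    (horth : ∀ i j, ∫ y, ψ i y * ψ j y ∂μ = if i = j then 1 else 0)
    {a : ι → ℝ} (ha : Summable fun i => a i ^ 2) {f : Y → ℝ} (hf : MemLp f 2 μ) {S : ℝ}
    (hS : HasSum (fun i => a i * ∫ y, ψ i y * f y ∂μ) S) :
    |S| ≤ √((∑' i, a i ^ 2) * ∫ y, f y ^ 2 ∂μ) := by
  refine le_of_tendsto' (continuous_abs.tendsto S |>.comp hS) fun s => Real.abs_le_sqrt ?_
  calc (∑ i ∈ s, a i * ∫ y, ψ i y * f y ∂μ) ^ 2
      ≤ (∑ i ∈ s, a i ^ 2) * ∑ i ∈ s, (∫ y, ψ i y * f y ∂μ) ^ 2 :=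
        Finset.sum_mul_sq_le_sq_mul_sq _ _ _
    _ ≤ (∑' i, a i ^ 2) * ∫ y, f y ^ 2 ∂μ :=
        mul_le_mul (ha.sum_le_tsum s fun i _ => sq_nonneg _)
          (sum_sq_integral_mul_le hψ horth hf s) (Finset.sum_nonneg fun i _ => sq_nonneg _)
          (tsum_nonneg fun i => sq_nonneg _)

theorem hasSum_mul_integral_mul_indicator_compl [IsFiniteMeasure μ] [Countable ι]
    (hψ : ∀ i, MemLp (ψ i) 2 μ)
    (horth : ∀ i j, ∫ y, ψ i y * ψ j y ∂μ = if i = j then 1 else 0)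
    {a : ι → ℝ} {f : Y → ℝ} (hf : ∀ᵐ y ∂μ, HasSum (fun i => a i * ψ i y) (f y))
    {B : Set Y} (hB : MeasurableSet B) {C : ℝ}
    (hC : ∀ s : Finset ι, ∀ y ∈ B, |∑ i ∈ s, a i * ψ i y| ≤ C) (t : ι) :
    HasSum (fun i => a i * ∫ y, ψ i y * Bᶜ.indicator (ψ t) y ∂μ)
      (a t - ∫ y in B, ψ t y * f y ∂μ) := by
  have hB' : HasSum (fun i => ∫ y in B, ψ t y * (a i * ψ i y) ∂μ)
      (∫ y in B, ψ t y * f y ∂μ) := by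
    refine hasSum_integral_of_abs_sum_le (bound := fun y => C * |ψ t y|)
      (fun i => ((hψ t).aestronglyMeasurable.mul
        ((hψ i).aestronglyMeasurable.const_mul _)).restrict)
      (((hψ t).integrable one_le_two).abs.const_mul C).restrict (fun s => ?_)
      (ae_restrict_of_ae (hf.mono fun y hy => hy.mul_left _))
    refine (ae_restrict_mem hB).mono fun y hy => ?_
    rw [← Finset.mul_sum, abs_mul, mul_comm]
    exact mul_le_mul_of_nonneg_right (hC s y hy) (abs_nonneg _)
  have hterm (i : ι) : a i * ∫ y, ψ i y * Bᶜ.indicator (ψ t) y ∂μ =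
      (if i = t then a t else 0) - ∫ y in B, ψ t y * (a i * ψ i y) ∂μ := by
    have hsplit := integral_add_compl (f := fun y => ψ t y * ψ i y) hB
      ((hψ t).integrable_mul (hψ i))
    rw [horth] at hsplit
    have hcompl :
        ∫ y, ψ i y * Bᶜ.indicator (ψ t) y ∂μ = ∫ y in Bᶜ, ψ t y * ψ i y ∂μ := by
      rw [← integral_indicator hB.compl]
      congr 1 with y
      by_cases hy : y ∈ Bᶜ <;> simp [hy, mul_comm]
    rw [hcompl, integral_congr_ae (.of_forall fun y => mul_left_comm _ _ _),
      integral_const_mul]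
    rcases eq_or_ne i t with rfl | hit
    · rw [if_pos rfl] at hsplit ⊢
      linear_combination a i * hsplit
    · rw [if_neg hit.symm] at hsplit
      rw [if_neg hit]
      linear_combination a i * hsplit
  simp only [hterm]
  exact (hasSum_ite_eq t (a t)).sub hB'

/- The series is only dominated on each `B n`; outside `B n` the error is bounded by Bessel's
inequality applied to `ψ t` restricted to `(B n)ᶜ`, whose norm tends to zero. -/
theorem integral_mul_eq_of_hasSum [IsFiniteMeasure μ] [Countable ι]
    (hψ : ∀ i, MemLp (ψ i) 2 μ)
    (horth : ∀ i j, ∫ y, ψ i y * ψ j y ∂μ = if i = j then 1 else 0)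
    {a : ι → ℝ} (ha : Summable fun i => a i ^ 2) {f : Y → ℝ}
    (hf : ∀ᵐ y ∂μ, HasSum (fun i => a i * ψ i y) (f y))
    {B : ℕ → Set Y} (hBm : ∀ n, MeasurableSet (B n)) (hBmono : Monotone B)
    (hBcover : ⋃ n, B n = univ)
    (hbdd : ∀ n, ∃ C, ∀ s : Finset ι, ∀ y ∈ B n, |∑ i ∈ s, a i * ψ i y| ≤ C)
    (t : ι) (hft : Integrable (fun y => ψ t y * f y) μ) :
    ∫ y, ψ t y * f y ∂μ = a t := by
  have hgap (n : ℕ) : |a t - ∫ y in B n, ψ t y * f y ∂μ| ≤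
      √((∑' i, a i ^ 2) * ∫ y in (B n)ᶜ, ψ t y ^ 2 ∂μ) := by
    obtain ⟨C, hC⟩ := hbdd n
    have h := abs_le_sqrt_of_hasSum_mul_integral_mul hψ horth ha
      ((hψ t).indicator (hBm n).compl)
      (hasSum_mul_integral_mul_indicator_compl hψ horth hf (hBm n) hC t)
    have hsq :
        (fun y => (B n)ᶜ.indicator (ψ t) y ^ 2) = (B n)ᶜ.indicator (ψ t · ^ 2) := by
      ext y
      by_cases hy : y ∈ (B n)ᶜ <;> simp [hy]
    rwa [hsq, integral_indicator (hBm n).compl] at h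
  have hinner : Tendsto (fun n => ∫ y in B n, ψ t y * f y ∂μ) atTop
      (𝓝 (∫ y, ψ t y * f y ∂μ)) := by
    simpa only [hBcover, Measure.restrict_univ] using
      tendsto_setIntegral_of_monotone hBm hBmono hft.integrableOn
  have houter : Tendsto (fun n => ∫ y in (B n)ᶜ, ψ t y ^ 2 ∂μ) atTop (𝓝 0) := by
    have hempty : ⋂ n, (B n)ᶜ = ∅ := by rw [← compl_iUnion, hBcover, compl_univ]
    simpa only [hempty, Measure.restrict_empty, integral_zero_measure] using
      tendsto_setIntegral_of_antitone (fun n => (hBm n).compl)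
        (fun m n hmn => compl_subset_compl.2 (hBmono hmn))
        ⟨0, (hψ t).integrable_sq.integrableOn⟩
  have hlim := le_of_tendsto_of_tendsto' ((tendsto_const_nhds.sub hinner).abs)
    ((houter.const_mul _).sqrt) hgap
  rw [mul_zero, Real.sqrt_zero, abs_nonpos_iff, sub_eq_zero] at hlim
  exact hlim.symm

end Orthonormal

end L2

theorem sq_sum_mul_le_of_hasSum {ι : Type*} {lam u v : ι → ℝ} (hlam : ∀ i, 0 ≤ lam i)
    {U V : ℝ} (hU : HasSum (fun i => lam i * u i ^ 2) U)
    (hV : HasSum (fun i => lam i * v i ^ 2) V) (s : Finset ι) :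
    (∑ i ∈ s, lam i * u i * v i) ^ 2 ≤ U * V := by
  have hu (i : ι) : 0 ≤ lam i * u i ^ 2 := mul_nonneg (hlam i) (sq_nonneg _)
  have hv (i : ι) : 0 ≤ lam i * v i ^ 2 := mul_nonneg (hlam i) (sq_nonneg _)
  calc (∑ i ∈ s, lam i * u i * v i) ^ 2
      ≤ (∑ i ∈ s, lam i * u i ^ 2) * ∑ i ∈ s, lam i * v i ^ 2 :=
        Finset.sum_sq_le_sum_mul_sum_of_sq_le_mul s (fun i _ => hu i) (fun i _ => hv i)
          fun i _ => le_of_eq (by ring)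
    _ ≤ U * V :=
        mul_le_mul (sum_le_hasSum s (fun i _ => hu i) hU)
          (sum_le_hasSum s (fun i _ => hv i) hV) (Finset.sum_nonneg fun i _ => hv i)
          (hU.nonneg hu)

theorem monotone_setOf_le_natCast {X : Type*} (D : X → ℝ) :
    Monotone fun n : ℕ => {x | D x ≤ n} :=
  fun _ _ hmn x (hx : D x ≤ _) => hx.trans (Nat.cast_le.2 hmn)

theorem iUnion_setOf_le_natCast {X : Type*} (D : X → ℝ) : ⋃ n : ℕ, {x | D x ≤ n} = univ :=
  eq_univ_of_forall fun x => mem_iUnion.2 ⟨⌈D x⌉₊, show D x ≤ _ from Nat.le_ceil _⟩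

section Mercer

variable {X : Type*} {ι : Type*} {φ : ι → X → ℝ} {lam : ι → ℝ}
  {k : X → X → ℝ}

theorem hasSum_kernel_diag
    (hMercer : ∀ x x', HasSum (fun i => lam i * φ i x * φ i x') (k x x')) (x : X) :
    HasSum (fun i => lam i * φ i x ^ 2) (k x x) := by
  simpa only [sq, mul_assoc] using hMercer x x

theorem kernel_diag_nonneg (hlam : ∀ i, 0 ≤ lam i)
    (hMercer : ∀ x x', HasSum (fun i => lam i * φ i x * φ i x') (k x x')) (x : X) :
    0 ≤ k x x :=
  (hasSum_kernel_diag hMercer x).nonneg fun i => mul_nonneg (hlam i) (sq_nonneg _)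

theorem measurable_kernel [MeasurableSpace X] [Countable ι] (hmeas : ∀ i, Measurable (φ i))
    (hMercer : ∀ x x', HasSum (fun i => lam i * φ i x * φ i x') (k x x')) :
    Measurable fun p : X × X => k p.1 p.2 :=
  measurable_of_tendsto_metrizable' atTop
    (fun s => Finset.measurable_fun_sum s fun i _ =>
      (measurable_const.mul ((hmeas i).comp measurable_fst)).mul
        ((hmeas i).comp measurable_snd))
    (tendsto_pi_nhds.2 fun p => hMercer p.1 p.2)

theorem measurable_kernel_diag [MeasurableSpace X] [Countable ι]
    (hmeas : ∀ i, Measurable (φ i))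
    (hMercer : ∀ x x', HasSum (fun i => lam i * φ i x * φ i x') (k x x')) :
    Measurable fun x => k x x :=
  (measurable_kernel hmeas hMercer).comp (measurable_id.prodMk measurable_id)

theorem hasSum_sq_sum_mul_kernel {n : Type*} [Fintype n]
    (hMercer : ∀ x x', HasSum (fun i => lam i * φ i x * φ i x') (k x x')) (xs : n → X)
    (v : n → ℝ) :
    HasSum (fun i => lam i * (∑ ν, v ν * φ i (xs ν)) ^ 2)
      (∑ ν, ∑ ρ, v ν * v ρ * k (xs ν) (xs ρ)) := by
  have e : (fun i => lam i * (∑ ν, v ν * φ i (xs ν)) ^ 2) =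
      fun i => ∑ ν, ∑ ρ, v ν * v ρ * (lam i * φ i (xs ν) * φ i (xs ρ)) := by
    ext i
    simp only [sq, Finset.sum_mul, Finset.mul_sum]
    exact Finset.sum_congr rfl fun ν _ => Finset.sum_congr rfl fun ρ _ => by ring
  rw [e]
  exact hasSum_sum fun ν _ => hasSum_sum fun ρ _ =>
    (hMercer (xs ν) (xs ρ)).mul_left (v ν * v ρ)

theorem hasSum_kernel_sum {n : Type*} [Fintype n]
    (hMercer : ∀ x x', HasSum (fun i => lam i * φ i x * φ i x') (k x x')) (xs : n → X)
    (c : n → ℝ) (x : X) :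
    HasSum (fun i => lam i * (∑ ν, c ν * φ i (xs ν)) * φ i x) (∑ ν, c ν * k x (xs ν)) := by
  have e : (fun i => lam i * (∑ ν, c ν * φ i (xs ν)) * φ i x) =
      fun i => ∑ ν, c ν * (lam i * φ i x * φ i (xs ν)) := by
    ext i
    simp only [Finset.mul_sum, Finset.sum_mul]
    exact Finset.sum_congr rfl fun ν _ => by ring
  rw [e]
  exact hasSum_sum fun ν _ => (hMercer x (xs ν)).mul_left (c ν)

theorem mul_sq_setIntegral_le_setIntegral_mul_kernel [MeasurableSpace X] {q : Measure X}
    [SFinite q] [Countable ι]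
    (hlam : ∀ i, 0 ≤ lam i) (hmeas : ∀ i, Measurable (φ i))
    (hMercer : ∀ x x', HasSum (fun i => lam i * φ i x * φ i x') (k x x'))
    {s : ι} (hs : Integrable (φ s) q) {A : Set X} (hA : MeasurableSet A) {C : ℝ}
    (hC : ∀ x ∈ A, k x x ≤ C) :
    lam s * (∫ x in A, φ s x * φ s x ∂q) ^ 2 ≤
      ∫ p in A ×ˢ A, φ s p.1 * φ s p.2 * k p.1 p.2 ∂(q.prod q) := by
  have hdiag := kernel_diag_nonneg hlam hMercer
  have hbdd (t : Finset ι) (p : X × X) (hp : p ∈ A ×ˢ A) :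
      |∑ j ∈ t, lam j * φ j p.1 * φ j p.2| ≤ |C| := by
    rw [← sq_le_sq, sq C]
    exact (sq_sum_mul_le_of_hasSum hlam (hasSum_kernel_diag hMercer p.1)
      (hasSum_kernel_diag hMercer p.2) t).trans
      (mul_le_mul (hC _ hp.1) (hC _ hp.2) (hdiag _) ((hdiag _).trans (hC _ hp.1)))
  have hsum := hasSum_integral_of_abs_sum_le (μ := (q.prod q).restrict (A ×ˢ A))
    (F := fun j p => φ s p.1 * φ s p.2 * (lam j * φ j p.1 * φ j p.2))
    (f := fun p => φ s p.1 * φ s p.2 * k p.1 p.2)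
    (bound := fun p => |C| * (|φ s p.1| * |φ s p.2|))
    (fun j => Measurable.aestronglyMeasurable (by have := hmeas s; have := hmeas j; fun_prop))
    ((hs.abs.mul_prod hs.abs).const_mul _).restrict
    (fun t => (ae_restrict_mem (hA.prod hA)).mono fun p hp => ?_)
    (.of_forall fun p => (hMercer p.1 p.2).mul_left _)
  · have hterm (j : ι) :
        ∫ p in A ×ˢ A, φ s p.1 * φ s p.2 * (lam j * φ j p.1 * φ j p.2) ∂(q.prod q) =
          lam j * (∫ x in A, φ s x * φ j x ∂q) ^ 2 := by
      rw [← Measure.prod_restrict, sq, ← integral_prod_mul, ← integral_const_mul]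
      congr 1 with p
      ring
    simpa only [hterm] using
      le_hasSum hsum s fun j _ => (hterm j).symm ▸ mul_nonneg (hlam j) (sq_nonneg _)
  · rw [← Finset.mul_sum, abs_mul, abs_mul, mul_comm]
    exact mul_le_mul_of_nonneg_right (hbdd t p hp) (by positivity)

theorem eigenvalue_le_sqrt_integral_sq_kernel [MeasurableSpace X] {q : Measure X}
    [IsFiniteMeasure q] [Countable ι] (hlam : ∀ i, 0 ≤ lam i) (hmeas : ∀ i, Measurable (φ i))
    (hMercer : ∀ x x', HasSum (fun i => lam i * φ i x * φ i x') (k x x'))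
    (hL2 : MemLp (fun p : X × X => k p.1 p.2) 2 (q.prod q)) {s : ι}
    (hs : ∫ x, φ s x * φ s x ∂q = 1) :
    lam s ≤ √(∫ p, k p.1 p.2 ^ 2 ∂(q.prod q)) := by
  have hφ : MemLp (φ s) 2 q :=
    memLp_two_of_integral_mul_self_eq_one (hmeas s).aestronglyMeasurable hs
  set A : ℕ → Set X := fun n => {x | k x x ≤ n}
  have hAm (n : ℕ) : MeasurableSet (A n) :=
    measurableSet_le (measurable_kernel_diag hmeas hMercer) measurable_const
  have hAmono : Monotone A := monotone_setOf_le_natCast _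
  have hΦ : MemLp (fun p : X × X => φ s p.1 * φ s p.2) 2 (q.prod q) := hφ.mul_prod hφ
  have hΦsq : ∫ p, (φ s p.1 * φ s p.2) ^ 2 ∂(q.prod q) = 1 := by
    have h := integral_prod_mul (μ := q) (ν := q) (fun x => φ s x ^ 2) (fun x => φ s x ^ 2)
    have hs2 : ∫ x, φ s x ^ 2 ∂q = 1 := by simpa only [sq] using hs
    simp only [← mul_pow, ← sq] at h
    rw [h, hs2, one_pow]
  have hlow : Tendsto (fun n => lam s * (∫ x in A n, φ s x * φ s x ∂q) ^ 2) atTop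
      (𝓝 (lam s)) := by
    have h := tendsto_setIntegral_of_monotone hAm hAmono (hφ.integrable_mul hφ).integrableOn
    simp only [Pi.mul_apply] at h
    rw [iUnion_setOf_le_natCast, Measure.restrict_univ, hs] at h
    simpa using (h.pow 2).const_mul (lam s)
  have hup : Tendsto (fun n => ∫ p in A n ×ˢ A n, φ s p.1 * φ s p.2 * k p.1 p.2 ∂(q.prod q))
      atTop (𝓝 (∫ p, φ s p.1 * φ s p.2 * k p.1 p.2 ∂(q.prod q))) := by
    have h := tendsto_setIntegral_of_monotone (fun n => (hAm n).prod (hAm n))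
      (fun m n hmn => prod_mono (hAmono hmn) (hAmono hmn))
      (hΦ.integrable_mul hL2).integrableOn
    rwa [iUnion_prod_of_monotone hAmono hAmono, iUnion_setOf_le_natCast, univ_prod_univ,
      Measure.restrict_univ] at h
  calc lam s ≤ ∫ p, φ s p.1 * φ s p.2 * k p.1 p.2 ∂(q.prod q) :=
        le_of_tendsto_of_tendsto' hlow hup fun n =>
          mul_sq_setIntegral_le_setIntegral_mul_kernel hlam hmeas hMercer
            (hφ.integrable one_le_two) (hAm n) fun x hx => hx
    _ ≤ √(∫ p, (φ s p.1 * φ s p.2) ^ 2 ∂(q.prod q)) *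
          √(∫ p, k p.1 p.2 ^ 2 ∂(q.prod q)) :=
        (le_abs_self _).trans (abs_integral_mul_le_sqrt_mul_sqrt hΦ hL2)
    _ = √(∫ p, k p.1 p.2 ^ 2 ∂(q.prod q)) := by rw [hΦsq, Real.sqrt_one, one_mul]

theorem integral_mul_kernel_sum [MeasurableSpace X] {q : Measure X} [IsFiniteMeasure q]
    [Countable ι] [DecidableEq ι] (hlam : ∀ i, 0 ≤ lam i) (hmeas : ∀ i, Measurable (φ i))
    (horth : ∀ i j, ∫ x, φ i x * φ j x ∂q = if i = j then 1 else 0)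
    (hMercer : ∀ x x', HasSum (fun i => lam i * φ i x * φ i x') (k x x'))
    (hL2 : MemLp (fun p : X × X => k p.1 p.2) 2 (q.prod q)) {n : Type*} [Fintype n]
    (xs : n → X) (c : n → ℝ) (t : ι)
    (hint : Integrable (fun x => φ t x * ∑ ν, c ν * k x (xs ν)) q) :
    ∫ x, φ t x * ∑ ν, c ν * k x (xs ν) ∂q = lam t * ∑ ν, c ν * φ t (xs ν) := by
  have hnorm (i : ι) : ∫ x, φ i x * φ i x ∂q = 1 := by simpa using horth i i
  have hW := hasSum_sq_sum_mul_kernel hMercer xs c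
  have hsq : Summable fun i => (lam i * ∑ ν, c ν * φ i (xs ν)) ^ 2 := by
    refine ((hW.summable.mul_left (√(∫ p, k p.1 p.2 ^ 2 ∂(q.prod q)))).of_nonneg_of_le
      (fun i => sq_nonneg _) fun i => ?_)
    rw [mul_pow, sq (lam i), mul_assoc]
    exact mul_le_mul_of_nonneg_right
      (eigenvalue_le_sqrt_integral_sq_kernel hlam hmeas hMercer hL2 (hnorm i))
      (mul_nonneg (hlam i) (sq_nonneg _))
  refine integral_mul_eq_of_hasSum
    (fun i => memLp_two_of_integral_mul_self_eq_one (hmeas i).aestronglyMeasurable (hnorm i))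
    horth hsq (.of_forall (hasSum_kernel_sum hMercer xs c))
    (fun n => measurableSet_le (measurable_kernel_diag hmeas hMercer) measurable_const)
    (monotone_setOf_le_natCast fun x => k x x) (iUnion_setOf_le_natCast _) (fun n => ?_)
    t hint
  refine ⟨√((∑ ν, ∑ ρ, c ν * c ρ * k (xs ν) (xs ρ)) * n), fun s x (hx : k x x ≤ n) =>
    Real.abs_le_sqrt ?_⟩
  exact (sq_sum_mul_le_of_hasSum hlam hW (hasSum_kernel_diag hMercer x) s).trans
    (mul_le_mul_of_nonneg_left hx (hW.nonneg fun i => mul_nonneg (hlam i) (sq_nonneg _)))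

theorem abs_integral_mul_kernel_sum_le [MeasurableSpace X] {q : Measure X} [IsFiniteMeasure q]
    [Countable ι] [DecidableEq ι] (hlam : ∀ i, 0 ≤ lam i) (hmeas : ∀ i, Measurable (φ i))
    (horth : ∀ i j, ∫ x, φ i x * φ j x ∂q = if i = j then 1 else 0)
    (hMercer : ∀ x x', HasSum (fun i => lam i * φ i x * φ i x') (k x x'))
    (hL2 : MemLp (fun p : X × X => k p.1 p.2) 2 (q.prod q)) {n : Type*} [Fintype n]
    (xs : n → X) (c : n → ℝ) (t : ι) :
    |∫ x, φ t x * ∑ ν, c ν * k x (xs ν) ∂q| ≤ lam t * |∑ ν, c ν * φ t (xs ν)| := by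
  by_cases hint : Integrable (fun x => φ t x * ∑ ν, c ν * k x (xs ν)) q
  · rw [integral_mul_kernel_sum hlam hmeas horth hMercer hL2 xs c t hint, abs_mul,
      abs_of_nonneg (hlam t)]
  · rw [integral_undef hint, abs_zero]
    exact mul_nonneg (hlam t) (abs_nonneg _)

theorem dotProduct_mulVec_kernel_nonneg {n : Type*} [Fintype n] (hlam : ∀ i, 0 ≤ lam i)
    (hMercer : ∀ x x', HasSum (fun i => lam i * φ i x * φ i x') (k x x')) (xs : n → X)
    (v : n → ℝ) : 0 ≤ v ⬝ᵥ (Matrix.of (fun ν ρ => k (xs ν) (xs ρ)) *ᵥ v) := by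
  have h := (hasSum_sq_sum_mul_kernel hMercer xs v).nonneg
    fun i => mul_nonneg (hlam i) (sq_nonneg _)
  refine h.trans_eq ?_
  simp only [dotProduct, mulVec, of_apply, Finset.mul_sum]
  exact Finset.sum_congr rfl fun ν _ => Finset.sum_congr rfl fun ρ _ => by ring

end Mercer

section Regularized

variable {n : Type*} [Fintype n] {K : Matrix n n ℝ} {σ : ℝ}

theorem sq_mul_dotProduct_self_le (hK : ∀ v, 0 ≤ v ⬝ᵥ (K *ᵥ v)) (hσ : 0 ≤ σ) (w : n → ℝ) :
    σ ^ 2 * (w ⬝ᵥ w) ≤ (K *ᵥ w + σ • w) ⬝ᵥ (K *ᵥ w + σ • w) := by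
  have hKw : 0 ≤ (K *ᵥ w) ⬝ᵥ (K *ᵥ w) := Fintype.sum_nonneg fun _ => mul_self_nonneg _
  simp only [add_dotProduct, dotProduct_add, smul_dotProduct, dotProduct_smul, smul_eq_mul,
    dotProduct_comm (K *ᵥ w) w]
  nlinarith [mul_nonneg hσ (hK w)]

variable [DecidableEq n]

theorem add_smul_one_mulVec (w : n → ℝ) : (K + σ • 1) *ᵥ w = K *ᵥ w + σ • w := by
  rw [add_mulVec, smul_mulVec, one_mulVec]

theorem isUnit_det_add_smul_one (hK : ∀ v, 0 ≤ v ⬝ᵥ (K *ᵥ v)) (hσ : 0 < σ) :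
    IsUnit (K + σ • 1).det := by
  refine isUnit_iff_ne_zero.2 fun hdet => ?_
  obtain ⟨w, hw0, hw⟩ := exists_mulVec_eq_zero_iff.2 hdet
  have h := sq_mul_dotProduct_self_le hK hσ.le w
  rw [← add_smul_one_mulVec, hw, zero_dotProduct] at h
  have hww : 0 ≤ w ⬝ᵥ w := Fintype.sum_nonneg fun _ => mul_self_nonneg _
  exact hw0 (dotProduct_self_eq_zero.1 (by nlinarith [pow_pos hσ 2]))

theorem abs_inv_mulVec_dotProduct_le (hK : ∀ v, 0 ≤ v ⬝ᵥ (K *ᵥ v)) (hσ : 0 < σ)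
    (u y : n → ℝ) : |((K + σ • 1)⁻¹ *ᵥ y) ⬝ᵥ u| ≤ √((u ⬝ᵥ u) * (y ⬝ᵥ y)) / σ := by
  set w := (K + σ • 1)⁻¹ *ᵥ y
  have hy : K *ᵥ w + σ • w = y := by
    rw [← add_smul_one_mulVec, mulVec_mulVec,
      mul_nonsing_inv _ (isUnit_det_add_smul_one hK hσ), one_mulVec]
  have hcs : (w ⬝ᵥ u) ^ 2 ≤ (w ⬝ᵥ w) * (u ⬝ᵥ u) := by
    simpa only [dotProduct, sq] using Finset.sum_mul_sq_le_sq_mul_sq Finset.univ w u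
  have hw := sq_mul_dotProduct_self_le hK hσ.le w
  rw [hy] at hw
  have huu : 0 ≤ u ⬝ᵥ u := Fintype.sum_nonneg fun _ => mul_self_nonneg _
  rw [le_div_iff₀ hσ, ← abs_of_pos hσ, ← abs_mul]
  refine Real.abs_le_sqrt ?_
  nlinarith [mul_le_mul_of_nonneg_right hcs (sq_nonneg σ), mul_le_mul_of_nonneg_left hw huu]

end Regularized

theorem abs_integral_mul_kernel_ridge_le {X : Type*} [MeasurableSpace X] {q : Measure X}
    [IsFiniteMeasure q] {ι : Type*} [Countable ι] [DecidableEq ι] {φ : ι → X → ℝ}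
    {lam : ι → ℝ} {k : X → X → ℝ} (hlam : ∀ i, 0 ≤ lam i) (hmeas : ∀ i, Measurable (φ i))
    (horth : ∀ i j, ∫ x, φ i x * φ j x ∂q = if i = j then 1 else 0)
    (hMercer : ∀ x x', HasSum (fun i => lam i * φ i x * φ i x') (k x x'))
    (hL2 : MemLp (fun p : X × X => k p.1 p.2) 2 (q.prod q)) {n : Type*} [Fintype n]
    [DecidableEq n] (xs : n → X) (y : n → ℝ) {σ : ℝ} (hσ : 0 < σ) (t : ι) :
    |∫ x, φ t x * ∑ ν, ((of (fun ν ρ => k (xs ν) (xs ρ)) + σ • 1)⁻¹ *ᵥ y) ν * k x (xs ν) ∂q| ≤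
      lam t * (√((∑ ν, φ t (xs ν) ^ 2) * ∑ ν, y ν ^ 2) / σ) :=
  (abs_integral_mul_kernel_sum_le hlam hmeas horth hMercer hL2 xs _ t).trans <|
    mul_le_mul_of_nonneg_left (by
      simpa only [dotProduct, sq] using abs_inv_mulVec_dotProduct_le
        (dotProduct_mulVec_kernel_nonneg hlam hMercer xs) hσ (fun ν => φ t (xs ν)) y) (hlam t)

theorem div_mul_abs_le_abs (a b : ℝ) : a / b * |b| ≤ |a| := by
  rcases eq_or_ne b 0 with rfl | hb
  · simp
  calc a / b * |b| ≤ |a / b| * |b| :=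
        mul_le_mul_of_nonneg_right (le_abs_self _) (abs_nonneg b)
    _ = |a| := by rw [← abs_mul, div_mul_cancel₀ a hb]

theorem div_sqrt_inv_mul_inv_mul_le {R S T : ℝ} (P : ℕ) (h : R ≤ √(S * T)) :
    R / √(((P : ℝ)⁻¹ * S) * ((P : ℝ)⁻¹ * T)) ≤ P := by
  rcases P.eq_zero_or_pos with rfl | hP
  · simp
  refine div_le_of_le_mul₀ (Real.sqrt_nonneg _) P.cast_nonneg ?_
  rwa [show ((P : ℝ)⁻¹ * S) * ((P : ℝ)⁻¹ * T) = ((P : ℝ)⁻¹) ^ 2 * (S * T) by ring,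
    Real.sqrt_mul (sq_nonneg _), Real.sqrt_sq (by positivity), ← mul_assoc,
    mul_inv_cancel₀ (by positivity), one_mul]

theorem sample_complexity_lower_bound_general
    {X : Type*} [MeasurableSpace X]
    (q : Measure X) [IsProbabilityMeasure q]
    {ι : Type*} [Countable ι] [DecidableEq ι] (φ : ι → X → ℝ) (lam : ι → ℝ)
    (hlam : ∀ i, 0 ≤ lam i)
    (hmeas : ∀ i, Measurable (φ i))
    (horth : ∀ i j, ∫ x, φ i x * φ j x ∂q = if i = j then 1 else 0)
    (k : X → X → ℝ)
    (hMercer : ∀ x x', HasSum (fun i => lam i * φ i x * φ i x') (k x x'))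
    (hL2 : MemLp (fun p : X × X => k p.1 p.2) 2 (q.prod q))
    {P : ℕ} (xs : Fin P → X)
    (yf : X → ℝ) (σ2 : ℝ) (hσ2 : 0 < σ2)
    (K : Matrix (Fin P) (Fin P) ℝ) (hKdef : ∀ ν ρ, K ν ρ = k (xs ν) (xs ρ))
    (fhat : X → ℝ)
    (hfhat : ∀ x, fhat x = ∑ ν, ∑ ρ,
      k x (xs ν) * (K + σ2 • (1 : Matrix (Fin P) (Fin P) ℝ))⁻¹ ν ρ * yf (xs ρ))
    (t : ι)
    (ε : ℝ)
    (hlearn : (∫ x, φ t x * fhat x ∂q) / (∫ x, φ t x * yf x ∂q) = 1 - ε) :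
    (P : ℝ) ≥ σ2 * (lam t)⁻¹ * (1 - ε) * |∫ x, φ t x * yf x ∂q| /
      Real.sqrt (((P : ℝ)⁻¹ * ∑ ν, φ t (xs ν) ^ 2) * ((P : ℝ)⁻¹ * ∑ ν, yf (xs ν) ^ 2)) := by
  obtain rfl : K = of fun ν ρ => k (xs ν) (xs ρ) := Matrix.ext hKdef
  set c := (of (fun ν ρ => k (xs ν) (xs ρ)) + σ2 • 1)⁻¹ *ᵥ fun ρ => yf (xs ρ)
  have hfhat_eq (x : X) : fhat x = ∑ ν, c ν * k x (xs ν) := by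
    simp only [hfhat, c, mulVec, dotProduct, Finset.sum_mul]
    exact Finset.sum_congr rfl fun ν _ => Finset.sum_congr rfl fun ρ _ => by ring
  simp only [hfhat_eq] at hlearn
  have hscale : 0 ≤ σ2 * (lam t)⁻¹ := mul_nonneg hσ2.le (inv_nonneg.2 (hlam t))
  refine div_sqrt_inv_mul_inv_mul_le P ?_
  calc σ2 * (lam t)⁻¹ * (1 - ε) * |∫ x, φ t x * yf x ∂q|
      ≤ σ2 * (lam t)⁻¹ * |∫ x, φ t x * ∑ ν, c ν * k x (xs ν) ∂q| := by
        rw [mul_assoc, ← hlearn]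
        exact mul_le_mul_of_nonneg_left (div_mul_abs_le_abs _ _) hscale
    _ ≤ σ2 * (lam t)⁻¹ * (lam t * (√((∑ ν, φ t (xs ν) ^ 2) * ∑ ν, yf (xs ν) ^ 2) / σ2)) :=
        mul_le_mul_of_nonneg_left (abs_integral_mul_kernel_ridge_le hlam hmeas horth hMercer hL2
          xs (fun ρ => yf (xs ρ)) hσ2 t) hscale
    _ = (lam t)⁻¹ * lam t * √((∑ ν, φ t (xs ν) ^ 2) * ∑ ν, yf (xs ν) ^ 2) := by
        field_simp
    _ ≤ √((∑ ν, φ t (xs ν) ^ 2) * ∑ ν, yf (xs ν) ^ 2) :=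
        mul_le_of_le_one_left (Real.sqrt_nonneg _) inv_mul_le_one

/-- Sample-complexity corollary. In the Mercer/KRR setting, if the
cross-dataset learnability of feature `φ_t` equals `1 - ε` with `ε ∈ (0,1)`, then
`P ≥ σ² λ_t⁻¹ (1-ε) |⟨φ_t, y⟩_q| / √(E_D[φ_t²] E_D[y²])`. -/
theorem sample_complexity_lower_bound
    {X : Type*} [MeasurableSpace X] [TopologicalSpace X]
    (q : Measure X) [IsProbabilityMeasure q]
    {ι : Type*} [Countable ι] [DecidableEq ι] (φ : ι → X → ℝ) (lam : ι → ℝ)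
    (hlam : ∀ i, 0 ≤ lam i)
    (hmeas : ∀ i, Measurable (φ i))
    (horth : ∀ i j, ∫ x, φ i x * φ j x ∂q = if i = j then 1 else 0)
    (k : X → X → ℝ)
    (hMercer : ∀ x x', HasSum (fun i => lam i * φ i x * φ i x') (k x x'))
    (hL2 : MemLp (fun p : X × X => k p.1 p.2) 2 (q.prod q))
    {P : ℕ} (xs : Fin P → X)
    (hsupp : ∀ ν, ∀ U : Set X, IsOpen U → xs ν ∈ U → 0 < q U)
    (yf : X → ℝ) (σ2 : ℝ) (hσ2 : 0 < σ2)
    (K : Matrix (Fin P) (Fin P) ℝ) (hKdef : ∀ ν ρ, K ν ρ = k (xs ν) (xs ρ))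
    (fhat : X → ℝ)
    (hfhat : ∀ x, fhat x = ∑ ν, ∑ ρ,
      k x (xs ν) * (K + σ2 • (1 : Matrix (Fin P) (Fin P) ℝ))⁻¹ ν ρ * yf (xs ρ))
    (t : ι) (hproj : ∫ x, φ t x * yf x ∂q ≠ 0) (hlamt : 0 < lam t)
    (hφD : 0 < (P : ℝ)⁻¹ * ∑ ν, φ t (xs ν) ^ 2)
    (hyD : 0 < (P : ℝ)⁻¹ * ∑ ν, yf (xs ν) ^ 2)
    (ε : ℝ) (hε : ε ∈ Set.Ioo (0 : ℝ) 1)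
    (hlearn : (∫ x, φ t x * fhat x ∂q) / (∫ x, φ t x * yf x ∂q) = 1 - ε) :
    (P : ℝ) ≥ σ2 * (lam t)⁻¹ * (1 - ε) * |∫ x, φ t x * yf x ∂q| /
      Real.sqrt (((P : ℝ)⁻¹ * ∑ ν, φ t (xs ν) ^ 2) * ((P : ℝ)⁻¹ * ∑ ν, yf (xs ν) ^ 2)) :=
  sample_complexity_lower_bound_general q φ lam hlam hmeas horth k hMercer hL2 xs yf σ2 hσ2 K hKdef
    fhat hfhat t ε hlearn
end

section
/- For the uniform measure on the sphere of radius √d in ℝᵈ (d even), setting n̂ = 2^{−d} d^{d} Γ(d/2)/Γ(3d/2), the asymptotic behavior as d → ∞ is n̂ · N(d,d) ∼ √(27/(64πd)) · (4e/3^{3/2})^d, where N(d,d) = ((3d−2)/d)·C(2d−3, d−1) is the dimension of degree-d spherical harmonics in dimension d. In particular n̂ · N(d,d) grows exponentially in d, since 4e/3^{3/2} > 1. -/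
set_option maxHeartbeats 2000000

open Filter Asymptotics Real

private lemma fact_eq {n : ℕ} (hn : n ≠ 0) :
    (Nat.factorial n : ℝ) = Stirling.stirlingSeq n * (√(2*(n:ℝ)) * ((n:ℝ)/Real.exp 1)^n) := by
  have h1 : (0:ℝ) < (n:ℝ) := by exact_mod_cast Nat.pos_of_ne_zero hn
  have h : √(2*(n:ℝ)) * ((n:ℝ)/Real.exp 1)^n ≠ 0 := by positivity
  rw [Stirling.stirlingSeq, div_mul_cancel₀ _ h]

private lemma stirling_ne {n : ℕ} (hn : n ≠ 0) : Stirling.stirlingSeq n ≠ 0 := by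
  obtain ⟨k, rfl⟩ := Nat.exists_eq_succ_of_ne_zero hn
  exact (Stirling.stirlingSeq'_pos k).ne'

private lemma tendsto_s_mul (k : ℕ) (hk : 0 < k) :
    Tendsto (fun m : ℕ => Stirling.stirlingSeq (k*m)) atTop (nhds (√π)) := by
  exact Stirling.tendsto_stirlingSeq_sqrt_pi.comp
    (Filter.tendsto_atTop_mono (fun m => Nat.le_mul_of_pos_left m hk) tendsto_id)

private lemma tendsto_parity {u : ℕ → ℝ} {x : ℝ}
    (he : Tendsto (fun m => u (2*m)) atTop (nhds x))
    (ho : Tendsto (fun m => u (2*m+1)) atTop (nhds x)) :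
    Tendsto u atTop (nhds x) := by
  rw [Filter.tendsto_def] at *
  intro s hs
  rw [Filter.mem_atTop_sets]
  obtain ⟨N₁, h₁⟩ := Filter.mem_atTop_sets.1 (he s hs)
  obtain ⟨N₂, h₂⟩ := Filter.mem_atTop_sets.1 (ho s hs)
  refine ⟨2*N₁+2*N₂+2, fun n hn => ?_⟩
  rcases Nat.even_or_odd n with ⟨k, hk⟩ | ⟨k, hk⟩
  · have h : u (2*k) ∈ s := h₁ k (by omega)
    have h2 : 2*k = n := by omega
    show u n ∈ s
    rw [← h2]; exact h
  · have h : u (2*k+1) ∈ s := h₂ k (by omega)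
    have h2 : 2*k+1 = n := by omega
    show u n ∈ s
    rw [← h2]; exact h

private lemma lin_ratio (a b c d : ℝ) (hc : c ≠ 0) :
    Tendsto (fun m : ℕ => (a*m+b)/(c*m+d)) atTop (nhds (a/c)) := by
  have hnat : Tendsto (fun m : ℕ => (m:ℝ)) atTop atTop := tendsto_natCast_atTop_atTop
  have h1 : Tendsto (fun m : ℕ => (a + b/m)/(c + d/m)) atTop (nhds ((a+0)/(c+0))) :=
    Tendsto.div (tendsto_const_nhds.add (Tendsto.div_atTop tendsto_const_nhds hnat))
      (tendsto_const_nhds.add (Tendsto.div_atTop tendsto_const_nhds hnat)) (by simpa)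
  rw [show a/c = (a+0)/(c+0) by norm_num]
  refine h1.congr' ?_
  filter_upwards [Filter.eventually_ge_atTop 1] with m hm
  have hm' : (m:ℝ) ≠ 0 := Nat.cast_ne_zero.2 (by omega)
  rcases eq_or_ne (c*(m:ℝ)+d) 0 with h | h
  · have h2 : c + d/(m:ℝ) = 0 := by
      field_simp
      linarith [h]
    rw [h, h2, div_zero, div_zero]
  · have h2 : c + d/(m:ℝ) ≠ 0 := by
      intro hcon
      apply h
      field_simp at hcon
      linarith [hcon]
    rw [div_eq_div_iff h2 h]
    field_simp

private lemma Gamma_half (m : ℕ) :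
    Real.Gamma ((m:ℝ) + 1/2) =
      (Nat.factorial (2*m) : ℝ) * √π / (4^m * (Nat.factorial m : ℝ)) := by
  induction m with
  | zero =>
    rw [show ((0:ℕ):ℝ) + 1/2 = 1/2 by norm_num, Real.Gamma_one_half_eq]
    norm_num
  | succ n ih =>
    have h0 : ((n:ℝ) + 1/2) ≠ 0 := by positivity
    have hrw : ((n+1 : ℕ) : ℝ) + 1/2 = ((n:ℝ) + 1/2) + 1 := by push_cast; ring
    rw [hrw, Real.Gamma_add_one h0, ih]
    have e1 : (Nat.factorial (2*(n+1)) : ℝ) = (2*(n:ℝ)+2) * (2*n+1) * Nat.factorial (2*n) := by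
      rw [show 2*(n+1) = (2*n+1)+1 by ring, Nat.factorial_succ, Nat.factorial_succ]
      push_cast; ring
    have e2 : (Nat.factorial (n+1) : ℝ) = ((n:ℝ)+1) * Nat.factorial n := by
      rw [Nat.factorial_succ]; push_cast; ring
    rw [e1, e2]
    have hfn : (Nat.factorial n : ℝ) ≠ 0 := Nat.cast_ne_zero.2 (Nat.factorial_ne_zero n)
    have h4 : (4:ℝ)^n ≠ 0 := by positivity
    field_simp
    ring

private lemma even_eq (n : ℕ) :
    ((((2 : ℝ) ^ (2*(n+1)))⁻¹ * ((2*(n+1) : ℕ) : ℝ) ^ (2*(n+1)) *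
        Real.Gamma (((2*(n+1) : ℕ) : ℝ) / 2) / Real.Gamma (3 * ((2*(n+1) : ℕ) : ℝ) / 2)) *
      (((3 * ((2*(n+1) : ℕ) : ℝ) - 2) / ((2*(n+1) : ℕ) : ℝ)) *
        (Nat.choose (2 * (2*(n+1)) - 3) ((2*(n+1)) - 1) : ℝ))) /
    (Real.sqrt (27 / (64 * Real.pi * ((2*(n+1) : ℕ) : ℝ))) *
        (4 * Real.exp 1 / Real.sqrt 27) ^ (2*(n+1)))
    = (Stirling.stirlingSeq (n+1) * Stirling.stirlingSeq (4*(n+1)) /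
        (Stirling.stirlingSeq (3*(n+1)) * (Stirling.stirlingSeq (2*(n+1)))^2)) *
      (3 * ((3*((n:ℝ)+1)-1)/(4*((n:ℝ)+1)-1)) * ((2*((n:ℝ)+1)-1)/(4*((n:ℝ)+1)-2))) *
      (8/9*√π) := by
  have hx : (0:ℝ) < (n:ℝ)+1 := by positivity
  have he : (0:ℝ) < Real.exp 1 := Real.exp_pos 1
  -- Gamma values
  have hΓ1 : Real.Gamma (((2*(n+1) : ℕ) : ℝ) / 2) = (Nat.factorial n : ℝ) := by
    rw [show ((2*(n+1) : ℕ) : ℝ)/2 = (n:ℝ)+1 by push_cast; ring, Real.Gamma_nat_eq_factorial]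
  have hΓ2 : Real.Gamma (3 * ((2*(n+1) : ℕ) : ℝ) / 2) = (Nat.factorial (3*n+2) : ℝ) := by
    rw [show 3 * ((2*(n+1) : ℕ) : ℝ)/2 = ((3*n+2 : ℕ):ℝ)+1 by push_cast; ring,
      Real.Gamma_nat_eq_factorial]
  have hch : ((Nat.choose (2*(2*(n+1))-3) (2*(n+1)-1)) : ℝ)
      = (Nat.factorial (4*n+1) : ℝ) / ((Nat.factorial (2*n+1) : ℝ) * (Nat.factorial (2*n) : ℝ)) := by
    rw [show 2*(2*(n+1))-3 = 4*n+1 by omega, show 2*(n+1)-1 = 2*n+1 by omega,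
      Nat.cast_choose ℝ (by omega : 2*n+1 ≤ 4*n+1), show 4*n+1-(2*n+1) = 2*n by omega]
  -- factorial values via Stirling
  have F1 : (Nat.factorial n : ℝ) = Stirling.stirlingSeq (n+1) *
      (√(2*((n:ℝ)+1)) * (((n:ℝ)+1)/Real.exp 1)^(n+1)) / ((n:ℝ)+1) := by
    have h := fact_eq (n := n+1) (by omega)
    rw [Nat.factorial_succ] at h
    push_cast at h
    rw [eq_div_iff (by positivity)]
    linear_combination h
  have F2 : (Nat.factorial (3*n+2) : ℝ) = Stirling.stirlingSeq (3*(n+1)) *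
      (√(2*(3*((n:ℝ)+1))) * ((3*((n:ℝ)+1))/Real.exp 1)^(3*(n+1))) / (3*((n:ℝ)+1)) := by
    have h := fact_eq (n := 3*(n+1)) (by omega)
    have h2 : Nat.factorial (3*(n+1)) = (3*(n+1)) * Nat.factorial (3*n+2) := by
      rw [show 3*(n+1) = (3*n+2)+1 by ring]; rw [Nat.factorial_succ]
    rw [h2] at h
    push_cast at h
    rw [eq_div_iff (by positivity)]
    linear_combination h
  have F3 : (Nat.factorial (4*n+1) : ℝ) = Stirling.stirlingSeq (4*(n+1)) *
      (√(2*(4*((n:ℝ)+1))) * ((4*((n:ℝ)+1))/Real.exp 1)^(4*(n+1))) /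
      ((4*((n:ℝ)+1)) * (4*((n:ℝ)+1)-1) * (4*((n:ℝ)+1)-2)) := by
    have hne : ((4*((n:ℝ)+1)) * (4*((n:ℝ)+1)-1) * (4*((n:ℝ)+1)-2)) ≠ 0 :=
      (mul_pos (mul_pos (by linarith : (0:ℝ) < 4*((n:ℝ)+1))
        (by linarith : (0:ℝ) < 4*((n:ℝ)+1)-1)) (by linarith : (0:ℝ) < 4*((n:ℝ)+1)-2)).ne'
    have h := fact_eq (n := 4*(n+1)) (by omega)
    have h2 : Nat.factorial (4*(n+1)) = (4*(n+1)) * ((4*n+3) * ((4*n+2) * Nat.factorial (4*n+1))) := by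
      rw [show 4*(n+1) = (4*n+3)+1 by ring]; rw [Nat.factorial_succ,
        show 4*n+3 = (4*n+2)+1 by ring, Nat.factorial_succ,
        show 4*n+2 = (4*n+1)+1 by ring, Nat.factorial_succ]
    rw [h2] at h
    push_cast at h
    rw [eq_div_iff hne]
    linear_combination h
  have F4 : (Nat.factorial (2*n+1) : ℝ) = Stirling.stirlingSeq (2*(n+1)) *
      (√(2*(2*((n:ℝ)+1))) * ((2*((n:ℝ)+1))/Real.exp 1)^(2*(n+1))) / (2*((n:ℝ)+1)) := by
    have h := fact_eq (n := 2*(n+1)) (by omega)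
    have h2 : Nat.factorial (2*(n+1)) = (2*(n+1)) * Nat.factorial (2*n+1) := by
      rw [show 2*(n+1) = (2*n+1)+1 by ring]; rw [Nat.factorial_succ]
    rw [h2] at h
    push_cast at h
    rw [eq_div_iff (by positivity)]
    linear_combination h
  have F5 : (Nat.factorial (2*n) : ℝ) = Stirling.stirlingSeq (2*(n+1)) *
      (√(2*(2*((n:ℝ)+1))) * ((2*((n:ℝ)+1))/Real.exp 1)^(2*(n+1))) /
      ((2*((n:ℝ)+1)) * (2*((n:ℝ)+1)-1)) := by
    have hne : ((2*((n:ℝ)+1)) * (2*((n:ℝ)+1)-1)) ≠ 0 :=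
      (mul_pos (by linarith : (0:ℝ) < 2*((n:ℝ)+1)) (by linarith : (0:ℝ) < 2*((n:ℝ)+1)-1)).ne'
    have h := fact_eq (n := 2*(n+1)) (by omega)
    have h2 : Nat.factorial (2*(n+1)) = (2*(n+1)) * ((2*n+1) * Nat.factorial (2*n)) := by
      rw [show 2*(n+1) = (2*n+1)+1 by ring]; rw [Nat.factorial_succ,
        show 2*n+1 = (2*n)+1 by ring, Nat.factorial_succ]
    rw [h2] at h
    push_cast at h
    rw [eq_div_iff hne]
    linear_combination h
  rw [hΓ1, hΓ2, hch, F1, F2, F3, F4, F5]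
  have hp27 : (4*Real.exp 1/√27)^(2*(n+1)) = (2^4*(Real.exp 1)^2/3^3)^(n+1) := by
    rw [pow_mul]
    congr 1
    rw [div_pow, mul_pow, Real.sq_sqrt (by norm_num : (0:ℝ) ≤ 27)]
    norm_num
  have hs1 : √(2*((n:ℝ)+1)) = √2*√((n:ℝ)+1) := Real.sqrt_mul (by norm_num) _
  have hs2 : √(2*(2*((n:ℝ)+1))) = 2*√((n:ℝ)+1) := by
    rw [show 2*(2*((n:ℝ)+1)) = 2^2*((n:ℝ)+1) by ring,
      Real.sqrt_mul (by positivity : (0:ℝ) ≤ 2^2), Real.sqrt_sq (by norm_num : (0:ℝ) ≤ 2)]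
  have hs3 : √(2*(3*((n:ℝ)+1))) = √2*(√3*√((n:ℝ)+1)) := by
    rw [Real.sqrt_mul (by norm_num : (0:ℝ) ≤ 2), Real.sqrt_mul (by norm_num : (0:ℝ) ≤ 3)]
  have hs4 : √(2*(4*((n:ℝ)+1))) = 2*(√2*√((n:ℝ)+1)) := by
    rw [show 2*(4*((n:ℝ)+1)) = 2^2*(2*((n:ℝ)+1)) by ring,
      Real.sqrt_mul (by positivity : (0:ℝ) ≤ 2^2), Real.sqrt_sq (by norm_num : (0:ℝ) ≤ 2), hs1]
  have hsg : √(27/(64*π*(2*((n:ℝ)+1)))) = 3*√3/(2^3*(√π*(√2*√((n:ℝ)+1)))) := by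
    rw [show (64:ℝ)*π*(2*((n:ℝ)+1)) = (2^3)^2*(π*(2*((n:ℝ)+1))) by ring]
    rw [Real.sqrt_div (by norm_num : (0:ℝ) ≤ 27),
      Real.sqrt_mul (by positivity : (0:ℝ) ≤ (2^3:ℝ)^2), Real.sqrt_sq (by norm_num : (0:ℝ) ≤ (2:ℝ)^3),
      Real.sqrt_mul Real.pi_pos.le, hs1,
      show (27:ℝ) = 3^2*3 by norm_num,
      Real.sqrt_mul (by positivity : (0:ℝ) ≤ (3:ℝ)^2), Real.sqrt_sq (by norm_num : (0:ℝ) ≤ (3:ℝ))]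
  rw [hp27]
  push_cast
  rw [hs1, hs2, hs3, hs4, hsg]
  have ne1 : Stirling.stirlingSeq (n+1) ≠ 0 := stirling_ne (by omega)
  have ne2 : Stirling.stirlingSeq (2*(n+1)) ≠ 0 := stirling_ne (by omega)
  have ne3 : Stirling.stirlingSeq (3*(n+1)) ≠ 0 := stirling_ne (by omega)
  have ne4 : Stirling.stirlingSeq (4*(n+1)) ≠ 0 := stirling_ne (by omega)
  have ne5 : Real.exp 1 ≠ 0 := (Real.exp_pos 1).ne'
  have ne6 : √π ≠ 0 := (Real.sqrt_pos.2 Real.pi_pos).ne'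
  have ne7 : √2 ≠ 0 := (Real.sqrt_pos.2 (by norm_num)).ne'
  have ne8 : √3 ≠ 0 := (Real.sqrt_pos.2 (by norm_num)).ne'
  have ne9 : √((n:ℝ)+1) ≠ 0 := (Real.sqrt_pos.2 hx).ne'
  have ne10 : ((n:ℝ)+1) ≠ 0 := hx.ne'
  have ne11 : (4*((n:ℝ)+1)-1) ≠ 0 := by
    have : (0:ℝ) < 4*((n:ℝ)+1)-1 := by linarith
    exact this.ne'
  have ne12 : (4*((n:ℝ)+1)-2) ≠ 0 := by
    have : (0:ℝ) < 4*((n:ℝ)+1)-2 := by linarith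
    exact this.ne'
  have ne13 : (2*((n:ℝ)+1)-1) ≠ 0 := by
    have : (0:ℝ) < 2*((n:ℝ)+1)-1 := by linarith
    exact this.ne'
  rw [show (3*(2*((n:ℝ)+1))-2 : ℝ) = 2*(3*((n:ℝ)+1)-1) by ring]
  rw [show (4*((n:ℝ)+1)/Real.exp 1)^(4*(n+1)) = (2^2*((n:ℝ)+1)/Real.exp 1)^(4*(n+1)) by norm_num]
  rw [show (8:ℝ)/9*√π = 4/3*(√2^2*√π/√3^2) by
    rw [Real.sq_sqrt (by norm_num : (0:ℝ) ≤ 2), Real.sq_sqrt (by norm_num : (0:ℝ) ≤ 3)]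
    ring]
  have hpw : ∀ (a : ℝ) (j k : ℕ), a^(j*k) = (a^k)^j := by
    intro a j k; rw [mul_comm, pow_mul]
  have hq1 : ((2:ℝ))^(2*(n+1)) = ((2:ℝ)^(n+1))^2 := hpw 2 2 (n+1)
  have hq2 : (2*((n:ℝ)+1))^(2*(n+1)) = ((2:ℝ)^(n+1))^2*(((n:ℝ)+1)^(n+1))^2 := by
    rw [mul_pow, hpw 2 2 (n+1), hpw _ 2 (n+1)]
  have hq3 : (((n:ℝ)+1)/Real.exp 1)^(n+1) = ((n:ℝ)+1)^(n+1)/(Real.exp 1)^(n+1) := div_pow _ _ _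
  have hq4 : (2*((n:ℝ)+1)/Real.exp 1)^(2*(n+1))
      = ((2:ℝ)^(n+1))^2*(((n:ℝ)+1)^(n+1))^2/((Real.exp 1)^(n+1))^2 := by
    rw [div_pow, mul_pow, hpw 2 2 (n+1), hpw _ 2 (n+1), hpw _ 2 (n+1)]
  have hq5 : (3*((n:ℝ)+1)/Real.exp 1)^(3*(n+1))
      = ((3:ℝ)^(n+1))^3*(((n:ℝ)+1)^(n+1))^3/((Real.exp 1)^(n+1))^3 := by
    rw [div_pow, mul_pow, hpw 3 3 (n+1), hpw _ 3 (n+1), hpw _ 3 (n+1)]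
  have hq6 : (2^2*((n:ℝ)+1)/Real.exp 1)^(4*(n+1))
      = ((2:ℝ)^(n+1))^8*(((n:ℝ)+1)^(n+1))^4/((Real.exp 1)^(n+1))^4 := by
    rw [div_pow, mul_pow, ← pow_mul (2:ℝ) 2 (4*(n+1)), show 2*(4*(n+1)) = 8*(n+1) by ring,
      hpw 2 8 (n+1), hpw _ 4 (n+1), hpw _ 4 (n+1)]
  have hq7 : (2^4*(Real.exp 1)^2/3^3)^(n+1)
      = ((2:ℝ)^(n+1))^4*((Real.exp 1)^(n+1))^2/((3:ℝ)^(n+1))^3 := by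
    rw [div_pow, mul_pow, pow_right_comm 2 4 (n+1), pow_right_comm (Real.exp 1) 2 (n+1),
      pow_right_comm 3 3 (n+1)]
  rw [hq1]
  rw [hq2]
  rw [hq3]
  rw [hq4]
  rw [hq5]
  rw [hq6]
  rw [hq7]
  have neT : ((2:ℝ)^(n+1)) ≠ 0 := by positivity
  have neS3 : ((3:ℝ)^(n+1)) ≠ 0 := by positivity
  have neX : (((n:ℝ)+1)^(n+1)) ≠ 0 := by positivity
  have neE : ((Real.exp 1)^(n+1)) ≠ 0 := by positivity
  generalize hxg : ((n:ℝ)+1) = x at ne9 ne10 ne11 ne12 ne13 neX ⊢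
  generalize hTg : ((2:ℝ)^(n+1)) = T at neT ⊢
  generalize hSg : ((3:ℝ)^(n+1)) = S3 at neS3 ⊢
  generalize hXg : (x^(n+1)) = X at neX ⊢
  generalize hEg : ((Real.exp 1)^(n+1)) = E at neE ⊢
  have hx' : (0:ℝ) < x := by rw [← hxg]; positivity
  have ne14 : (3*x-1) ≠ 0 := by
    have : (0:ℝ) < 3*x-1 := by nlinarith
    exact this.ne'
  field_simp
  ring_nf

private lemma odd_eq (n : ℕ) :
    ((((2 : ℝ) ^ (2*(n+1)+1))⁻¹ * ((2*(n+1)+1 : ℕ) : ℝ) ^ (2*(n+1)+1) *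
        Real.Gamma (((2*(n+1)+1 : ℕ) : ℝ) / 2) / Real.Gamma (3 * ((2*(n+1)+1 : ℕ) : ℝ) / 2)) *
      (((3 * ((2*(n+1)+1 : ℕ) : ℝ) - 2) / ((2*(n+1)+1 : ℕ) : ℝ)) *
        (Nat.choose (2 * (2*(n+1)+1) - 3) ((2*(n+1)+1) - 1) : ℝ))) /
    (Real.sqrt (27 / (64 * Real.pi * ((2*(n+1)+1 : ℕ) : ℝ))) *
        (4 * Real.exp 1 / Real.sqrt 27) ^ (2*(n+1)+1))
    = (Stirling.stirlingSeq (3*(n+1)) * Stirling.stirlingSeq (4*(n+1)) /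
        (Stirling.stirlingSeq (n+1) * Stirling.stirlingSeq (6*(n+1)) * Stirling.stirlingSeq (2*(n+1)))) *
      ((1+1/(2*((n:ℝ)+1)))^(2*(n+1))) *
      ((3*((n:ℝ)+1)+1)/(6*((n:ℝ)+1)+2)) *
      √((2*((n:ℝ)+1)+1)/(2*((n:ℝ)+1))) *
      (2*√π/Real.exp 1) := by
  have hx : (0:ℝ) < (n:ℝ)+1 := by positivity
  have he : (0:ℝ) < Real.exp 1 := Real.exp_pos 1
  have hΓ1 : Real.Gamma (((2*(n+1)+1 : ℕ) : ℝ) / 2)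
      = (Nat.factorial (2*(n+1)) : ℝ) * √π / (4^(n+1) * (Nat.factorial (n+1) : ℝ)) := by
    rw [show ((2*(n+1)+1 : ℕ) : ℝ)/2 = ((n+1 : ℕ):ℝ) + 1/2 by push_cast; ring, Gamma_half]
  have hΓ2 : Real.Gamma (3 * ((2*(n+1)+1 : ℕ) : ℝ) / 2)
      = (Nat.factorial (2*(3*(n+1)+1)) : ℝ) * √π / (4^(3*(n+1)+1) * (Nat.factorial (3*(n+1)+1) : ℝ)) := by
    rw [show 3 * ((2*(n+1)+1 : ℕ) : ℝ)/2 = ((3*(n+1)+1 : ℕ):ℝ) + 1/2 by push_cast; ring, Gamma_half]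
  have hch : ((Nat.choose (2*(2*(n+1)+1)-3) ((2*(n+1)+1)-1)) : ℝ)
      = (Nat.factorial (4*n+3) : ℝ) / ((Nat.factorial (2*(n+1)) : ℝ) * (Nat.factorial (2*n+1) : ℝ)) := by
    rw [show 2*(2*(n+1)+1)-3 = 4*n+3 by omega, show (2*(n+1)+1)-1 = 2*(n+1) by omega,
      Nat.cast_choose ℝ (by omega : 2*(n+1) ≤ 4*n+3), show 4*n+3-(2*(n+1)) = 2*n+1 by omega]
  have G1 : (Nat.factorial (n+1) : ℝ) = Stirling.stirlingSeq (n+1) *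
      (√(2*((n:ℝ)+1)) * (((n:ℝ)+1)/Real.exp 1)^(n+1)) := by
    have h := fact_eq (n := n+1) (by omega)
    push_cast at h
    linear_combination h
  have G2 : (Nat.factorial (2*(n+1)) : ℝ) = Stirling.stirlingSeq (2*(n+1)) *
      (√(2*(2*((n:ℝ)+1))) * ((2*((n:ℝ)+1))/Real.exp 1)^(2*(n+1))) := by
    have h := fact_eq (n := 2*(n+1)) (by omega)
    push_cast at h
    linear_combination h
  have G3 : (Nat.factorial (3*(n+1)+1) : ℝ) = (3*((n:ℝ)+1)+1) * (Stirling.stirlingSeq (3*(n+1)) *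
      (√(2*(3*((n:ℝ)+1))) * ((3*((n:ℝ)+1))/Real.exp 1)^(3*(n+1)))) := by
    have h := fact_eq (n := 3*(n+1)) (by omega)
    rw [Nat.factorial_succ]
    push_cast at h ⊢
    rw [h]
  have G4 : (Nat.factorial (2*(3*(n+1)+1)) : ℝ) = (6*((n:ℝ)+1)+2)*((6*((n:ℝ)+1)+1) *
      (Stirling.stirlingSeq (6*(n+1)) *
        (√(2*(6*((n:ℝ)+1))) * ((6*((n:ℝ)+1))/Real.exp 1)^(6*(n+1))))) := by
    have h := fact_eq (n := 6*(n+1)) (by omega)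
    have h2 : Nat.factorial (2*(3*(n+1)+1)) = (6*(n+1)+2) * ((6*(n+1)+1) * Nat.factorial (6*(n+1))) := by
      rw [(by omega : 2*(3*(n+1)+1) = (6*(n+1)+1)+1), Nat.factorial_succ,
        (by omega : 6*(n+1)+1 = (6*(n+1))+1), Nat.factorial_succ]
    rw [h2]
    push_cast at h ⊢
    rw [h]
  have G5 : (Nat.factorial (4*n+3) : ℝ) = Stirling.stirlingSeq (4*(n+1)) *
      (√(2*(4*((n:ℝ)+1))) * ((4*((n:ℝ)+1))/Real.exp 1)^(4*(n+1))) / (4*((n:ℝ)+1)) := by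
    have h := fact_eq (n := 4*(n+1)) (by omega)
    have h2 : Nat.factorial (4*(n+1)) = (4*(n+1)) * Nat.factorial (4*n+3) := by
      rw [(by omega : 4*(n+1) = (4*n+3)+1), Nat.factorial_succ]
    rw [h2] at h
    push_cast at h
    rw [eq_div_iff (by positivity : (4*((n:ℝ)+1)) ≠ 0)]
    linear_combination h
  have G6 : (Nat.factorial (2*n+1) : ℝ) = Stirling.stirlingSeq (2*(n+1)) *
      (√(2*(2*((n:ℝ)+1))) * ((2*((n:ℝ)+1))/Real.exp 1)^(2*(n+1))) / (2*((n:ℝ)+1)) := by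
    have h := fact_eq (n := 2*(n+1)) (by omega)
    have h2 : Nat.factorial (2*(n+1)) = (2*(n+1)) * Nat.factorial (2*n+1) := by
      rw [(by omega : 2*(n+1) = (2*n+1)+1), Nat.factorial_succ]
    rw [h2] at h
    push_cast at h
    rw [eq_div_iff (by positivity : (2*((n:ℝ)+1)) ≠ 0)]
    linear_combination h
  rw [hΓ1, hΓ2, hch, G1, G2, G3, G4, G5, G6]
  have hpw : ∀ (a : ℝ) (j k : ℕ), a^(j*k) = (a^k)^j := by
    intro a j k; rw [mul_comm, pow_mul]
  -- power of the exponential base in g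
  have hp27 : (4*Real.exp 1/√27)^(2*(n+1)+1)
      = (4*Real.exp 1/√27)*((2^4*(Real.exp 1)^2/3^3)^(n+1)) := by
    rw [pow_succ, mul_comm]
    congr 1
    rw [pow_mul]
    congr 1
    rw [div_pow, mul_pow, Real.sq_sqrt (by norm_num : (0:ℝ) ≤ 27)]
    norm_num
  have hs27 : (√27:ℝ) = 3*√3 := by
    rw [show (27:ℝ) = 3^2*3 by norm_num,
      Real.sqrt_mul (by positivity : (0:ℝ) ≤ (3:ℝ)^2), Real.sqrt_sq (by norm_num : (0:ℝ) ≤ (3:ℝ))]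
  have hs1 : √(2*((n:ℝ)+1)) = √2*√((n:ℝ)+1) := Real.sqrt_mul (by norm_num) _
  have hs2 : √(2*(2*((n:ℝ)+1))) = 2*√((n:ℝ)+1) := by
    rw [show 2*(2*((n:ℝ)+1)) = 2^2*((n:ℝ)+1) by ring,
      Real.sqrt_mul (by positivity : (0:ℝ) ≤ 2^2), Real.sqrt_sq (by norm_num : (0:ℝ) ≤ 2)]
  have hs3 : √(2*(3*((n:ℝ)+1))) = √2*(√3*√((n:ℝ)+1)) := by
    rw [Real.sqrt_mul (by norm_num : (0:ℝ) ≤ 2), Real.sqrt_mul (by norm_num : (0:ℝ) ≤ 3)]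
  have hs4 : √(2*(4*((n:ℝ)+1))) = 2*(√2*√((n:ℝ)+1)) := by
    rw [show 2*(4*((n:ℝ)+1)) = 2^2*(2*((n:ℝ)+1)) by ring,
      Real.sqrt_mul (by positivity : (0:ℝ) ≤ 2^2), Real.sqrt_sq (by norm_num : (0:ℝ) ≤ 2), hs1]
  have hs6 : √(2*(6*((n:ℝ)+1))) = 2*(√3*√((n:ℝ)+1)) := by
    rw [show 2*(6*((n:ℝ)+1)) = 2^2*(3*((n:ℝ)+1)) by ring,
      Real.sqrt_mul (by positivity : (0:ℝ) ≤ 2^2), Real.sqrt_sq (by norm_num : (0:ℝ) ≤ 2),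
      Real.sqrt_mul (by norm_num : (0:ℝ) ≤ 3)]
  have hsg : √(27/(64*π*(2*((n:ℝ)+1)+1))) = 3*√3/(2^3*(√π*√(2*((n:ℝ)+1)+1))) := by
    rw [show (64:ℝ)*π*(2*((n:ℝ)+1)+1) = (2^3)^2*(π*(2*((n:ℝ)+1)+1)) by ring]
    rw [Real.sqrt_div (by norm_num : (0:ℝ) ≤ 27),
      Real.sqrt_mul (by positivity : (0:ℝ) ≤ (2^3:ℝ)^2), Real.sqrt_sq (by norm_num : (0:ℝ) ≤ (2:ℝ)^3),
      Real.sqrt_mul Real.pi_pos.le, hs27]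
  have hsT : √((2*((n:ℝ)+1)+1)/(2*((n:ℝ)+1))) = √(2*((n:ℝ)+1)+1)/(√2*√((n:ℝ)+1)) := by
    rw [Real.sqrt_div (by positivity : (0:ℝ) ≤ 2*((n:ℝ)+1)+1), hs1]
  rw [hp27, hs27]
  push_cast
  rw [hsg, hsT, hs1, hs2, hs3, hs4, hs6]
  -- E-term and d^d and 2^d
  have hET : (1+1/(2*((n:ℝ)+1)))^(2*(n+1))
      = ((2*((n:ℝ)+1)+1)^(n+1))^2/(((2:ℝ)^(n+1))^2*(((n:ℝ)+1)^(n+1))^2) := by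
    rw [show 1+1/(2*((n:ℝ)+1)) = (2*((n:ℝ)+1)+1)/(2*((n:ℝ)+1)) by
        field_simp, div_pow, mul_pow, hpw _ 2 (n+1), hpw 2 2 (n+1), hpw _ 2 (n+1)]
  have hdd : (2*((n:ℝ)+1)+1)^(2*(n+1)+1)
      = ((2*((n:ℝ)+1)+1)^(n+1))^2*(2*((n:ℝ)+1)+1) := by
    rw [pow_succ, hpw _ 2 (n+1)]
  have h2d : (2:ℝ)^(2*(n+1)+1) = ((2:ℝ)^(n+1))^2*2 := by
    rw [pow_succ, hpw 2 2 (n+1)]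
  have h4a : (4:ℝ)^(n+1) = ((2:ℝ)^(n+1))^2 := by
    rw [show (4:ℝ) = 2^2 by norm_num, pow_right_comm]
  have h4b : (4:ℝ)^(3*(n+1)+1) = ((2:ℝ)^(n+1))^6*2^2 := by
    rw [pow_succ, show (4:ℝ) = 2^2 by norm_num, ← pow_mul 2 2 (3*(n+1)),
      show 2*(3*(n+1)) = 6*(n+1) by ring, hpw 2 6 (n+1)]
  have hq3 : (((n:ℝ)+1)/Real.exp 1)^(n+1) = ((n:ℝ)+1)^(n+1)/(Real.exp 1)^(n+1) := div_pow _ _ _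
  have hq4 : (2*((n:ℝ)+1)/Real.exp 1)^(2*(n+1))
      = ((2:ℝ)^(n+1))^2*(((n:ℝ)+1)^(n+1))^2/((Real.exp 1)^(n+1))^2 := by
    rw [div_pow, mul_pow, hpw 2 2 (n+1), hpw _ 2 (n+1), hpw _ 2 (n+1)]
  have hq5 : (3*((n:ℝ)+1)/Real.exp 1)^(3*(n+1))
      = ((3:ℝ)^(n+1))^3*(((n:ℝ)+1)^(n+1))^3/((Real.exp 1)^(n+1))^3 := by
    rw [div_pow, mul_pow, hpw 3 3 (n+1), hpw _ 3 (n+1), hpw _ 3 (n+1)]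
  have hq6 : (4*((n:ℝ)+1)/Real.exp 1)^(4*(n+1))
      = ((2:ℝ)^(n+1))^8*(((n:ℝ)+1)^(n+1))^4/((Real.exp 1)^(n+1))^4 := by
    rw [show (4*((n:ℝ)+1)/Real.exp 1)^(4*(n+1)) = (2^2*((n:ℝ)+1)/Real.exp 1)^(4*(n+1)) by norm_num,
      div_pow, mul_pow, ← pow_mul (2:ℝ) 2 (4*(n+1)), show 2*(4*(n+1)) = 8*(n+1) by ring,
      hpw 2 8 (n+1), hpw _ 4 (n+1), hpw _ 4 (n+1)]
  have hq8 : (6*((n:ℝ)+1)/Real.exp 1)^(6*(n+1))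
      = ((2:ℝ)^(n+1))^6*((3:ℝ)^(n+1))^6*(((n:ℝ)+1)^(n+1))^6/((Real.exp 1)^(n+1))^6 := by
    rw [show (6*((n:ℝ)+1)/Real.exp 1)^(6*(n+1)) = (2*3*((n:ℝ)+1)/Real.exp 1)^(6*(n+1)) by norm_num,
      div_pow, mul_pow, mul_pow, hpw 2 6 (n+1), hpw 3 6 (n+1), hpw _ 6 (n+1), hpw _ 6 (n+1)]
  have hq7 : (2^4*(Real.exp 1)^2/3^3)^(n+1)
      = ((2:ℝ)^(n+1))^4*((Real.exp 1)^(n+1))^2/((3:ℝ)^(n+1))^3 := by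
    rw [div_pow, mul_pow, pow_right_comm 2 4 (n+1), pow_right_comm (Real.exp 1) 2 (n+1),
      pow_right_comm 3 3 (n+1)]
  rw [hET, hdd, h2d, h4a, h4b, hq3, hq4, hq5, hq6, hq8, hq7]
  have neT : ((2:ℝ)^(n+1)) ≠ 0 := by positivity
  have neS3 : ((3:ℝ)^(n+1)) ≠ 0 := by positivity
  have neX : (((n:ℝ)+1)^(n+1)) ≠ 0 := by positivity
  have neE : ((Real.exp 1)^(n+1)) ≠ 0 := by positivity
  have neW : ((2*((n:ℝ)+1)+1)^(n+1)) ≠ 0 := by positivity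
  have ne1 : Stirling.stirlingSeq (n+1) ≠ 0 := stirling_ne (by omega)
  have ne2 : Stirling.stirlingSeq (2*(n+1)) ≠ 0 := stirling_ne (by omega)
  have ne3 : Stirling.stirlingSeq (3*(n+1)) ≠ 0 := stirling_ne (by omega)
  have ne4 : Stirling.stirlingSeq (4*(n+1)) ≠ 0 := stirling_ne (by omega)
  have ne4b : Stirling.stirlingSeq (6*(n+1)) ≠ 0 := stirling_ne (by omega)
  have ne5 : Real.exp 1 ≠ 0 := (Real.exp_pos 1).ne'
  have ne6 : √π ≠ 0 := (Real.sqrt_pos.2 Real.pi_pos).ne'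
  have ne7 : √2 ≠ 0 := (Real.sqrt_pos.2 (by norm_num)).ne'
  have ne8 : √3 ≠ 0 := (Real.sqrt_pos.2 (by norm_num)).ne'
  have ne9 : √((n:ℝ)+1) ≠ 0 := (Real.sqrt_pos.2 hx).ne'
  have ne9b : √(2*((n:ℝ)+1)+1) ≠ 0 := (Real.sqrt_pos.2 (by linarith)).ne'
  have ne10 : ((n:ℝ)+1) ≠ 0 := hx.ne'
  have ne11 : (2*((n:ℝ)+1)+1) ≠ 0 := by positivity
  have ne12 : (3*((n:ℝ)+1)+1) ≠ 0 := by positivity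
  have ne13 : (6*((n:ℝ)+1)+1) ≠ 0 := by positivity
  have ne14 : (6*((n:ℝ)+1)+2) ≠ 0 := by positivity
  generalize hxg : ((n:ℝ)+1) = x at ne9 ne9b ne10 ne11 ne12 ne13 ne14 neX neW ⊢
  generalize hWg : ((2*x+1)^(n+1)) = W at neW ⊢
  generalize hTg : ((2:ℝ)^(n+1)) = T at neT ⊢
  generalize hSg : ((3:ℝ)^(n+1)) = S3 at neS3 ⊢
  generalize hXg : (x^(n+1)) = X at neX ⊢
  generalize hEg : ((Real.exp 1)^(n+1)) = E at neE ⊢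
  field_simp
  ring_nf
  rw [Real.sq_sqrt (by norm_num : (0:ℝ) ≤ 2)]
  ring_nf
  have hA : (2 + x*18 + x^2*36 : ℝ) ≠ 0 := by
    rw [show (2 + x*18 + x^2*36 : ℝ) = (6*x+1)*(6*x+2) by ring]; exact mul_ne_zero ne13 ne14
  have hB : (2 + x*6 : ℝ) ≠ 0 := by
    rw [show (2 + x*6 : ℝ) = 6*x+2 by ring]; exact ne14
  field_simp
  ring

private lemma tendsto_even_aux :
    Tendsto (fun m : ℕ =>
      (Stirling.stirlingSeq m * Stirling.stirlingSeq (4*m) /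
        (Stirling.stirlingSeq (3*m) * (Stirling.stirlingSeq (2*m))^2)) *
      (3 * ((3*(m:ℝ)-1)/(4*(m:ℝ)-1)) * ((2*(m:ℝ)-1)/(4*(m:ℝ)-2))) *
      (8/9*√π)) atTop (nhds 1) := by
  have hp : (0:ℝ) < √π := Real.sqrt_pos.2 Real.pi_pos
  have hS : Tendsto (fun m : ℕ => Stirling.stirlingSeq m * Stirling.stirlingSeq (4*m) /
      (Stirling.stirlingSeq (3*m) * (Stirling.stirlingSeq (2*m))^2)) atTop
      (nhds (√π*√π/(√π*(√π)^2))) :=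
    Tendsto.div (Stirling.tendsto_stirlingSeq_sqrt_pi.mul (tendsto_s_mul 4 (by norm_num)))
      ((tendsto_s_mul 3 (by norm_num)).mul ((tendsto_s_mul 2 (by norm_num)).pow 2))
      (by positivity)
  have hr1 : Tendsto (fun m : ℕ => (3*(m:ℝ)-1)/(4*(m:ℝ)-1)) atTop (nhds (3/4)) :=
    (lin_ratio 3 (-1) 4 (-1) (by norm_num)).congr (fun m => by ring_nf)
  have hr2 : Tendsto (fun m : ℕ => (2*(m:ℝ)-1)/(4*(m:ℝ)-2)) atTop (nhds (2/4)) :=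
    (lin_ratio 2 (-1) 4 (-2) (by norm_num)).congr (fun m => by ring_nf)
  have hall := (hS.mul (((tendsto_const_nhds (x := (3:ℝ))).mul hr1).mul hr2)).mul
    (tendsto_const_nhds (x := (8/9*√π : ℝ)))
  have hval : √π*√π/(√π*(√π)^2) * (3*(3/4)*(2/4)) * (8/9*√π) = 1 := by
    field_simp
    ring
  rwa [hval] at hall

private lemma tendsto_odd_aux :
    Tendsto (fun m : ℕ =>
      (Stirling.stirlingSeq (3*m) * Stirling.stirlingSeq (4*m) /
        (Stirling.stirlingSeq m * Stirling.stirlingSeq (6*m) * Stirling.stirlingSeq (2*m))) *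
      ((1+1/(2*(m:ℝ)))^(2*m)) *
      ((3*(m:ℝ)+1)/(6*(m:ℝ)+2)) *
      √((2*(m:ℝ)+1)/(2*(m:ℝ))) *
      (2*√π/Real.exp 1)) atTop (nhds 1) := by
  have hp : (0:ℝ) < √π := Real.sqrt_pos.2 Real.pi_pos
  have hS : Tendsto (fun m : ℕ => Stirling.stirlingSeq (3*m) * Stirling.stirlingSeq (4*m) /
      (Stirling.stirlingSeq m * Stirling.stirlingSeq (6*m) * Stirling.stirlingSeq (2*m))) atTop
      (nhds (√π*√π/(√π*√π*√π))) :=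
    Tendsto.div ((tendsto_s_mul 3 (by norm_num)).mul (tendsto_s_mul 4 (by norm_num)))
      ((Stirling.tendsto_stirlingSeq_sqrt_pi.mul (tendsto_s_mul 6 (by norm_num))).mul
        (tendsto_s_mul 2 (by norm_num)))
      (by positivity)
  have h2m : Tendsto (fun m : ℕ => 2*m) atTop atTop :=
    Filter.tendsto_atTop_mono (fun m => Nat.le_mul_of_pos_left m (by norm_num)) tendsto_id
  have hE : Tendsto (fun m : ℕ => (1+1/(2*(m:ℝ)))^(2*m)) atTop (nhds (Real.exp 1)) := by
    have h := (Real.tendsto_one_add_div_pow_exp 1).comp h2m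
    refine h.congr (fun m => ?_)
    push_cast
    norm_num
  have hr : Tendsto (fun m : ℕ => (3*(m:ℝ)+1)/(6*(m:ℝ)+2)) atTop (nhds (3/6)) :=
    lin_ratio 3 1 6 2 (by norm_num)
  have hT : Tendsto (fun m : ℕ => √((2*(m:ℝ)+1)/(2*(m:ℝ)))) atTop (nhds (√(2/2))) := by
    have hin : Tendsto (fun m : ℕ => (2*(m:ℝ)+1)/(2*(m:ℝ)+0)) atTop (nhds (2/2)) :=
      lin_ratio 2 1 2 0 (by norm_num)
    have hin' : Tendsto (fun m : ℕ => (2*(m:ℝ)+1)/(2*(m:ℝ))) atTop (nhds (2/2)) :=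
      hin.congr (fun m => by ring_nf)
    exact hin'.sqrt
  have hall := ((((hS.mul hE).mul hr).mul hT).mul
    (tendsto_const_nhds (x := (2*√π/Real.exp 1 : ℝ))))
  have hval : √π*√π/(√π*√π*√π) * Real.exp 1 * (3/6) * √(2/2) * (2*√π/Real.exp 1) = 1 := by
    rw [show (2:ℝ)/2 = 1 by norm_num, Real.sqrt_one]
    have he : Real.exp 1 ≠ 0 := (Real.exp_pos 1).ne'
    field_simp
    ring
  rwa [hval] at hall

/-- With `n̂(d) = 2^{-d} d^d Γ(d/2)/Γ(3d/2)` (the sphere average of the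
parity monomial on the radius-`√d` sphere) and `N(d,d) = ((3d-2)/d)·C(2d-3, d-1)` (the
degree-`d` spherical-harmonic dimension), as `d → ∞`,
`n̂(d)·N(d,d) ∼ √(27/(64πd)) · (4e/3^{3/2})^d`; in particular the base `4e/3^{3/2} > 1`,
so the product grows exponentially in `d`. -/
theorem parity_sample_complexity_asymptotics :
    (fun d : ℕ =>
        (((2 : ℝ) ^ d)⁻¹ * (d : ℝ) ^ d * Real.Gamma (d / 2) / Real.Gamma (3 * d / 2)) *
        (((3 * d - 2 : ℝ) / d) * (Nat.choose (2 * d - 3) (d - 1) : ℝ))) ~[atTop]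
      (fun d : ℕ =>
        Real.sqrt (27 / (64 * Real.pi * d)) *
          (4 * Real.exp 1 / Real.sqrt 27) ^ d) ∧
    1 < 4 * Real.exp 1 / Real.sqrt 27 := by
  constructor
  · have hg : ∀ᶠ d : ℕ in atTop,
        (fun d : ℕ => Real.sqrt (27 / (64 * Real.pi * d)) *
          (4 * Real.exp 1 / Real.sqrt 27) ^ d) d ≠ 0 := by
      filter_upwards [Filter.eventually_ge_atTop 1] with d hd
      have hd' : (0:ℝ) < (d:ℝ) := by exact_mod_cast hd
      have h1 : (0:ℝ) < Real.sqrt (27 / (64 * Real.pi * d)) := by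
        apply Real.sqrt_pos.2
        positivity
      have h2 : (0:ℝ) < 4 * Real.exp 1 / Real.sqrt 27 := by positivity
      exact (mul_pos h1 (pow_pos h2 d)).ne'
    rw [Asymptotics.isEquivalent_iff_tendsto_one hg]
    apply tendsto_parity
    · refine tendsto_even_aux.congr' ?_
      filter_upwards [Filter.eventually_ge_atTop 1] with m hm
      obtain ⟨k, rfl⟩ : ∃ k, m = k+1 := ⟨m-1, by omega⟩
      simp only [Pi.div_apply]
      rw [even_eq k]
      push_cast
      ring
    · refine tendsto_odd_aux.congr' ?_
      filter_upwards [Filter.eventually_ge_atTop 1] with m hm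
      obtain ⟨k, rfl⟩ : ∃ k, m = k+1 := ⟨m-1, by omega⟩
      simp only [Pi.div_apply]
      rw [odd_eq k]
      push_cast
      ring
  · have h27 : Real.sqrt 27 < 6 := by
      rw [show (6:ℝ) = Real.sqrt 36 by
        rw [show (36:ℝ) = 6^2 by norm_num, Real.sqrt_sq (by norm_num : (0:ℝ) ≤ 6)]]
      exact Real.sqrt_lt_sqrt (by norm_num) (by norm_num)
    have hpos : (0:ℝ) < Real.sqrt 27 := Real.sqrt_pos.2 (by norm_num)
    rw [lt_div_iff₀ hpos, one_mul]
    have := Real.exp_one_gt_d9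
    nlinarith
end
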